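/- Let G be a strongly connected digraph with start vertex s. Two vertices x and y are 2-edge-connected in G if and only if r_x = r_y, h_x = h_y, r^R_x = r^R_y, and h^R_x = h^R_y, where r_x (resp., r^R_x) is the root of the tree containing x in the bridge decomposition of the dominator tree D (resp., D^R), and h_x (resp., h^R_x) is the nearest boundary ancestor of x in the loop nesting tree H (resp., H^R). -/

import Mathlib

/-!
Deleting an edge `(a,b)` can only separate `x` from `y` if it is a bridge of `G_s` or of
`G_s^R`; otherwise `s` still reaches, and is reached by, every vertex. If `(a,b)` is a bridge of
`G_s`, the vertices it cuts off from `s` are exactly those dominated by `b`, which accounts for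
`r_x = r_y`. Inside `D(b)`, climbing `H` from `x` through non-boundary vertices follows loops whose
headers stay dominated by `b`, so these loops avoid the bridge and `x` stays strongly connected to
`h_x` in `G ∖ (a,b)`. Conversely, two distinct boundary vertices dominated by `b` cannot lie on a
common cycle avoiding the bridge: the preorder-minimal vertex of such a cycle is a DFS ancestor
of the loop parent of one of them, and this forces that loop parent into `D(b)` as well.
-/


namespace StrongConn

variable {V : Type*}

/-- `p` is a walk in the digraph `G` from `u` to `v`, recorded as the list of visited vertices. -/
def IsWalk (G : V → V → Prop) (u v : V) (p : List V) : Prop :=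
  p.Chain' G ∧ p.head? = some u ∧ p.getLast? = some v

/-- The directed edge `(a,b)` occurs on the walk `p`. -/
def EdgeOn (a b : V) (p : List V) : Prop := (a, b) ∈ p.zip p.tail

/-- `v` is reachable from `u` in `G`. -/
def Reach (G : V → V → Prop) (u v : V) : Prop := ∃ p, IsWalk G u v p

/-- `u` and `v` are strongly connected in `G`. -/
def SConn (G : V → V → Prop) (u v : V) : Prop := Reach G u v ∧ Reach G v u

def StronglyConnected (G : V → V → Prop) : Prop := ∀ u v, Reach G u v

/-- `G` with the edge `(a,b)` deleted. -/
def DelEdge (G : V → V → Prop) (a b : V) : V → V → Prop :=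
  fun x y => G x y ∧ ¬(x = a ∧ y = b)

/-- `G` with the vertex `u` (and all incident edges) deleted. -/
def DelVertex (G : V → V → Prop) (u : V) : V → V → Prop :=
  fun x y => G x y ∧ x ≠ u ∧ y ≠ u

/-- `C` is a strongly connected component of `G`. -/
def IsSCC (G : V → V → Prop) (C : Set V) : Prop :=
  C.Nonempty ∧ (∀ x ∈ C, ∀ y ∈ C, SConn G x y) ∧ ∀ x ∈ C, ∀ y, SConn G x y → y ∈ C

/-- `(a,b)` is a strong bridge: an edge whose removal increases the number of
strongly connected components, i.e. it separates some strongly connected pair. -/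
def IsStrongBridge (G : V → V → Prop) (a b : V) : Prop :=
  G a b ∧ ∃ x y, SConn G x y ∧ ¬ SConn (DelEdge G a b) x y

/-- `u` is a strong articulation point: removing it increases the number of strongly
connected components, i.e. it separates some strongly connected pair of other vertices. -/
def IsStrongArticulationPoint (G : V → V → Prop) (u : V) : Prop :=
  ∃ x y, x ≠ u ∧ y ≠ u ∧ SConn G x y ∧ ¬ SConn (DelVertex G u) x y

/-- The reverse digraph. -/
def Rev (G : V → V → Prop) : V → V → Prop := fun x y => G y x

/-- `u` dominates `v` in the flow graph `G_s`; equivalently, `u` is an ancestor of `v`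
(and `v` a descendant of `u`) in the dominator tree of `G_s`. -/
def Dom (G : V → V → Prop) (s u v : V) : Prop :=
  ∀ p, IsWalk G s v p → u ∈ p

/-- `u` is the immediate dominator of `v` in `G_s` (the parent of `v` in the dominator tree). -/
def Idom (G : V → V → Prop) (s u v : V) : Prop :=
  u ≠ v ∧ Dom G s u v ∧ ∀ w, w ≠ v → Dom G s w v → Dom G s w u

/-- Edge `(a,b)` is a bridge of the flow graph `G_s`: every walk from `s` to `b` uses it. -/
def IsBridge (G : V → V → Prop) (s a b : V) : Prop :=
  G a b ∧ ∀ p, IsWalk G s b p → EdgeOn a b p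

/-- `r` is the head of some bridge of `G_s`, i.e. a non-`s` root in the bridge
decomposition of the dominator tree. -/
def IsBridgeHead (G : V → V → Prop) (s r : V) : Prop :=
  ∃ a, IsBridge G s a r

/-- `r` is the root of the tree containing `x` in the bridge decomposition of the
dominator tree of `G_s`: `r` dominates `x`, `r` is `s` or a bridge head, and every
bridge head dominating `x` dominates `r`. -/
def IsBDRoot (G : V → V → Prop) (s r x : V) : Prop :=
  Dom G s r x ∧ (r = s ∨ IsBridgeHead G s r) ∧
    ∀ z, Dom G s z x → IsBridgeHead G s z → Dom G s z r

/-- A depth-first search tree of `G` rooted at `s`, given by a parent function and a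
preorder numbering. -/
structure DFSTree (G : V → V → Prop) (s : V) where
  parent : V → V
  pre : V → ℕ
  parent_root : parent s = s
  parent_edge : ∀ v, v ≠ s → G (parent v) v
  root_reach : ∀ v, ∃ n, parent^[n] v = s
  pre_inj : Function.Injective pre
  pre_parent : ∀ v, v ≠ s → pre (parent v) < pre v
  /-- Descendants of a vertex form a contiguous interval in preorder. -/
  interval : ∀ u v w, (∃ n, parent^[n] w = u) → pre u ≤ pre v → pre v ≤ pre w →
      ∃ n, parent^[n] v = u
  /-- The defining property of depth-first search trees: every edge going forward
  in preorder goes to a descendant. -/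
  dfs_edge : ∀ u v, G u v → pre u < pre v → ∃ n, parent^[n] v = u

/-- `u` is an ancestor of `v` in the tree `T` (every vertex is an ancestor of itself). -/
def DFSTree.Anc {G : V → V → Prop} {s : V} (T : DFSTree G s) (u v : V) : Prop :=
  ∃ n, T.parent^[n] v = u

/-- `x ∈ loop(u)` with respect to the tree-ancestor relation `tanc`: `x` is a descendant
of `u` and there is a walk from `x` to `u` using only descendants of `u`. -/
def InLoop (G : V → V → Prop) (tanc : V → V → Prop) (u x : V) : Prop :=
  tanc u x ∧ ∃ p, IsWalk G x u p ∧ ∀ y ∈ p, tanc u y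

/-- `hp` is the parent function of the loop nesting tree of `G_s` with respect to the
DFS-tree ancestor relation `tanc`: `hp x` is the nearest proper ancestor `u` of `x`
in the DFS tree with `x ∈ loop(u)`. -/
def IsLoopParent (G : V → V → Prop) (s : V) (tanc : V → V → Prop) (hp : V → V) : Prop :=
  hp s = s ∧ ∀ x, x ≠ s →
    (tanc (hp x) x ∧ hp x ≠ x ∧ InLoop G tanc (hp x) x ∧
      ∀ u, tanc u x → u ≠ x → InLoop G tanc u x → tanc u (hp x))

/-- `u` is an ancestor of `v` in the loop nesting tree with parent function `hp`. -/
def HAnc (hp : V → V) (u v : V) : Prop := ∃ n, hp^[n] v = u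

/-- `w` is the nearest common ancestor of `x` and `y` in the loop nesting tree
with parent function `hp`. -/
def HNca (hp : V → V) (x y w : V) : Prop :=
  HAnc hp w x ∧ HAnc hp w y ∧ ∀ z, HAnc hp z x → HAnc hp z y → HAnc hp z w

/-- `u` is a nontrivial dominator of `G_s`: `u ≠ s` and `u` is not a leaf of the
dominator tree (it properly dominates some vertex). -/
def NontrivialDom (G : V → V → Prop) (s u : V) : Prop :=
  u ≠ s ∧ ∃ w, w ≠ u ∧ Dom G s u w

/-- `a` and `b` are siblings in the dominator tree of `G_s`. -/
def SiblingInD (G : V → V → Prop) (s a b : V) : Prop :=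
  a ≠ b ∧ ∃ w, Idom G s w a ∧ Idom G s w b

/-- Given the bridge-decomposition root function `r` and loop-nesting parent `hp`,
`z` is a boundary vertex. -/
def Boundary (s : V) (r hp : V → V) (z : V) : Prop := z = s ∨ r (hp z) ≠ r z

/-- `z` is the nearest boundary ancestor of `x` in the loop nesting tree. -/
def IsNearestBoundary (s : V) (r hp : V → V) (x z : V) : Prop :=
  HAnc hp z x ∧ Boundary s r hp z ∧
    ∀ z', HAnc hp z' x → Boundary s r hp z' → HAnc hp z' z

/-- `x` and `y` are 2-edge-connected: no single edge deletion leaves them in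
different strongly connected components. -/
def TwoEdgeConnected (G : V → V → Prop) (x y : V) : Prop :=
  ∀ a b, G a b → SConn (DelEdge G a b) x y

inductive Walk (G : V → V → Prop) : V → V → List V → Prop
  | single (v : V) : Walk G v v [v]
  | cons {u w v : V} {p : List V} : G u w → Walk G w v p → Walk G u v (u :: p)

namespace Walk

variable {G G' : V → V → Prop} {u v w c : V} {p q : List V}

theorem ne_nil (h : Walk G u v p) : p ≠ [] := by
  cases h <;> simp

theorem head_mem (h : Walk G u v p) : u ∈ p := by
  cases h <;> simp

theorem last_mem (h : Walk G u v p) : v ∈ p := by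
  induction h with
  | single => simp
  | cons _ _ ih => exact List.mem_cons_of_mem _ ih

theorem head?_eq (h : Walk G u v p) : p.head? = some u := by
  cases h <;> simp

theorem getLast?_eq (h : Walk G u v p) : p.getLast? = some v := by
  induction h with
  | single => simp
  | cons _ h ih =>
    obtain ⟨c, t, rfl⟩ := List.exists_cons_of_ne_nil h.ne_nil
    rwa [List.getLast?_cons_cons]

theorem mono (h : ∀ a b, G a b → G' a b) (hw : Walk G u v p) : Walk G' u v p := by
  induction hw with
  | single => exact single _
  | cons hg _ ih => exact cons (h _ _ hg) ih

theorem mono_of_mem (hw : Walk G u v p) (h : ∀ a b, a ∈ p → b ∈ p → G a b → G' a b) :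
    Walk G' u v p := by
  induction hw with
  | single => exact single _
  | cons hg hw' ih =>
    exact cons (h _ _ List.mem_cons_self (List.mem_cons_of_mem _ hw'.head_mem) hg)
      (ih fun a b ha hb => h a b (List.mem_cons_of_mem _ ha) (List.mem_cons_of_mem _ hb))

theorem concat (h : Walk G u v p) (hg : G v w) : Walk G u w (p ++ [w]) := by
  induction h with
  | single => exact cons hg (single _)
  | cons hg' _ ih => exact cons hg' (ih hg)

theorem append (h : Walk G u v p) (h' : Walk G v w q) : Walk G u w (p.dropLast ++ q) := by
  induction h with
  | single => simpa using h'
  | cons hg hw ih =>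
    rw [List.dropLast_cons_of_ne_nil hw.ne_nil]
    exact cons hg (ih h')

theorem reverse (h : Walk G u v p) : Walk (Rev G) v u p.reverse := by
  induction h with
  | single => exact single _
  | cons hg _ ih => simpa using ih.concat hg

theorem exists_prefix (h : Walk G u v p) (hc : c ∈ p) :
    ∃ p₁, Walk G u c (p₁ ++ [c]) ∧ c ∉ p₁ ∧ p₁ ++ [c] <+: p := by
  induction h with
  | single w =>
    obtain rfl := List.mem_singleton.1 hc
    exact ⟨[], single _, List.not_mem_nil, List.prefix_refl _⟩
  | @cons u w v p hg hw ih =>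
    by_cases hcu : c = u
    · subst hcu
      exact ⟨[], single _, List.not_mem_nil, by simp⟩
    · obtain ⟨p₁, hw₁, hc₁, hpre⟩ := ih ((List.mem_cons.1 hc).resolve_left hcu)
      exact ⟨u :: p₁, cons hg hw₁, by simp [hcu, hc₁],
        List.cons_prefix_cons.2 ⟨rfl, hpre⟩⟩

theorem exists_suffix (h : Walk G u v p) (hc : c ∈ p) : ∃ q, Walk G c v q ∧ q <:+ p := by
  induction h with
  | single w =>
    obtain rfl := List.mem_singleton.1 hc
    exact ⟨_, single _, List.suffix_refl _⟩
  | @cons u w v p hg hw ih =>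
    by_cases hcu : c = u
    · subst hcu
      exact ⟨_, cons hg hw, List.suffix_refl _⟩
    · obtain ⟨q, hq, hsuf⟩ := ih ((List.mem_cons.1 hc).resolve_left hcu)
      exact ⟨q, hq, hsuf.trans (List.suffix_cons _ _)⟩

theorem exists_of_mem_closed (h : Walk G u u p) (hw : w ∈ p) (hc : c ∈ p) :
    ∃ q, Walk G w c q ∧ q ⊆ p := by
  obtain ⟨q₁, hq₁, hsuf⟩ := h.exists_suffix hw
  obtain ⟨p₁, hp₁, -, hpre⟩ := h.exists_prefix hc
  refine ⟨_, hq₁.append hp₁, fun z hz => ?_⟩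
  rcases List.mem_append.1 hz with hz | hz
  · exact hsuf.subset (List.dropLast_subset _ hz)
  · exact hpre.subset hz

end Walk

theorem isWalk_iff_walk {G : V → V → Prop} {u v : V} {p : List V} :
    IsWalk G u v p ↔ Walk G u v p := by
  constructor
  · rintro ⟨hc, hh, hl⟩
    induction p generalizing u with
    | nil => simp at hh
    | cons a q ih =>
      obtain rfl : a = u := by simpa using hh
      cases q with
      | nil =>
        obtain rfl : a = v := by simpa using hl
        exact Walk.single _
      | cons b t =>
        rw [List.getLast?_cons_cons] at hl
        exact Walk.cons (List.isChain_cons_cons.1 hc).1 (ih (List.isChain_cons_cons.1 hc).2 rfl hl)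
  · intro h
    refine ⟨?_, h.head?_eq, h.getLast?_eq⟩
    induction h with
    | single => exact List.isChain_singleton _
    | cons hg h ih =>
      cases h with
      | single => exact List.isChain_pair.2 hg
      | cons => exact List.isChain_cons_cons.2 ⟨hg, ih⟩

section Edges

variable {G : V → V → Prop} {a b x u v : V} {p : List V}

theorem edgeOn_cons_iff :
    EdgeOn a b (x :: p) ↔ (x = a ∧ p.head? = some b) ∨ EdgeOn a b p := by
  cases p with
  | nil => simp [EdgeOn]
  | cons y t => simp [EdgeOn, eq_comm]

theorem EdgeOn.mem_dropLast (h : EdgeOn a b p) : a ∈ p.dropLast := by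
  induction p with
  | nil => simp [EdgeOn] at h
  | cons x p ih =>
    cases p with
    | nil => simp [EdgeOn] at h
    | cons y t =>
      rw [List.dropLast_cons_of_ne_nil (List.cons_ne_nil y t)]
      rcases edgeOn_cons_iff.1 h with ⟨rfl, -⟩ | h
      · exact List.mem_cons_self
      · exact List.mem_cons_of_mem _ (ih h)

theorem EdgeOn.left_mem (h : EdgeOn a b p) : a ∈ p :=
  List.dropLast_subset _ h.mem_dropLast

theorem EdgeOn.of_prefix {q : List V} (h : EdgeOn a b p) (hpq : p <+: q) : EdgeOn a b q := by
  obtain ⟨t, rfl⟩ := hpq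
  induction p with
  | nil => simp [EdgeOn] at h
  | cons x p ih =>
    rcases edgeOn_cons_iff.1 h with ⟨rfl, hb⟩ | h
    · cases p with
      | nil => simp at hb
      | cons y t' => exact edgeOn_cons_iff.2 (Or.inl ⟨rfl, by simpa using hb⟩)
    · exact edgeOn_cons_iff.2 (Or.inr (ih h))

theorem walk_delEdge_iff : Walk (DelEdge G a b) u v p ↔ Walk G u v p ∧ ¬ EdgeOn a b p := by
  constructor
  · intro h
    induction h with
    | single => exact ⟨Walk.single _, by simp [EdgeOn]⟩
    | cons hg hw ih =>
      refine ⟨Walk.cons hg.1 ih.1, fun he => ?_⟩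
      rcases edgeOn_cons_iff.1 he with ⟨rfl, hb⟩ | he
      · rw [hw.head?_eq, Option.some_inj] at hb
        exact hg.2 ⟨rfl, hb⟩
      · exact ih.2 he
  · rintro ⟨h, he⟩
    induction h with
    | single => exact Walk.single _
    | cons hg hw ih =>
      refine Walk.cons ⟨hg, ?_⟩ (ih fun h => he (edgeOn_cons_iff.2 (Or.inr h)))
      rintro ⟨rfl, rfl⟩
      exact he (edgeOn_cons_iff.2 (Or.inl ⟨rfl, hw.head?_eq⟩))

theorem Walk.delEdge_of_not_mem (hw : Walk G u v p) (hb : b ∉ p) : Walk (DelEdge G a b) u v p :=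
  hw.mono_of_mem fun _ _ _ hy hg => ⟨hg, fun h => hb (h.2 ▸ hy)⟩

theorem Walk.of_delEdge (h : Walk (DelEdge G a b) u v p) : Walk G u v p :=
  h.mono fun _ _ hg => hg.1

end Edges

section Reach

variable {G : V → V → Prop} {a b u v w : V}

theorem reach_iff_walk : Reach G u v ↔ ∃ p, Walk G u v p :=
  exists_congr fun _ => isWalk_iff_walk

theorem Walk.reach {p : List V} (h : Walk G u v p) : Reach G u v :=
  reach_iff_walk.2 ⟨p, h⟩

theorem Reach.refl (G : V → V → Prop) (v : V) : Reach G v v := (Walk.single v).reach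

theorem Reach.trans (h : Reach G u v) (h' : Reach G v w) : Reach G u w := by
  obtain ⟨p, hp⟩ := reach_iff_walk.1 h
  obtain ⟨q, hq⟩ := reach_iff_walk.1 h'
  exact (hp.append hq).reach

theorem Reach.single (h : G u v) : Reach G u v := (Walk.cons h (Walk.single v)).reach

theorem reach_rev_iff : Reach (Rev G) u v ↔ Reach G v u :=
  ⟨fun h => by
    obtain ⟨p, hp⟩ := reach_iff_walk.1 h
    exact (hp.reverse.mono fun _ _ h => h).reach,
  fun h => by
    obtain ⟨p, hp⟩ := reach_iff_walk.1 h
    exact hp.reverse.reach⟩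

theorem SConn.symm (h : SConn G u v) : SConn G v u := ⟨h.2, h.1⟩

theorem SConn.trans (h : SConn G u v) (h' : SConn G v w) : SConn G u w :=
  ⟨h.1.trans h'.1, h'.2.trans h.2⟩

theorem sconn_rev_iff : SConn (Rev G) u v ↔ SConn G u v := by
  rw [SConn, SConn, reach_rev_iff, reach_rev_iff, and_comm]

theorem SConn.exists_closed_walk (h : SConn G u v) : ∃ C, Walk G u u C ∧ v ∈ C := by
  obtain ⟨p, hp⟩ := reach_iff_walk.1 h.1
  obtain ⟨q, hq⟩ := reach_iff_walk.1 h.2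
  exact ⟨_, hp.append hq, List.mem_append_right _ hq.head_mem⟩

theorem delEdge_rev : DelEdge (Rev G) b a = Rev (DelEdge G a b) := by
  ext x y
  simp only [DelEdge, Rev, and_comm]

theorem StronglyConnected.rev (hG : StronglyConnected G) : StronglyConnected (Rev G) :=
  fun u v => reach_rev_iff.2 (hG v u)

theorem TwoEdgeConnected.symm {x y : V} (h : TwoEdgeConnected G x y) : TwoEdgeConnected G y x :=
  fun a b hab => (h a b hab).symm

theorem TwoEdgeConnected.rev {x y : V} (h : TwoEdgeConnected G x y) :
    TwoEdgeConnected (Rev G) x y := fun b a hab => by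
  rw [delEdge_rev, sconn_rev_iff]
  exact h a b hab

end Reach

section Dominators

variable {G : V → V → Prop} {s a b u v w x y ρ ρ' : V}

theorem dom_iff_walk : Dom G s u v ↔ ∀ p, Walk G s v p → u ∈ p :=
  forall_congr' fun _ => by rw [isWalk_iff_walk]

theorem not_dom_iff : ¬ Dom G s u v ↔ ∃ p, Walk G s v p ∧ u ∉ p := by
  rw [dom_iff_walk]
  push Not
  rfl

theorem Dom.refl (G : V → V → Prop) (s v : V) : Dom G s v v :=
  dom_iff_walk.2 fun _ hp => hp.last_mem

theorem dom_root (G : V → V → Prop) (s v : V) : Dom G s s v :=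
  dom_iff_walk.2 fun _ hp => hp.head_mem

theorem Dom.eq_root (h : Dom G s u s) : u = s :=
  List.mem_singleton.1 (dom_iff_walk.1 h _ (Walk.single s))

theorem Dom.trans (h₁ : Dom G s u v) (h₂ : Dom G s v w) : Dom G s u w :=
  dom_iff_walk.2 fun p hp => by
    obtain ⟨p₁, hp₁, -, hpre⟩ := hp.exists_prefix (dom_iff_walk.1 h₂ p hp)
    exact hpre.subset (dom_iff_walk.1 h₁ _ hp₁)

theorem Dom.antisymm (h₁ : Dom G s u v) (h₂ : Dom G s v u) (hr : Reach G s v) : u = v := by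
  obtain ⟨p, hp⟩ := reach_iff_walk.1 hr
  obtain ⟨q, hq, hu, -⟩ := hp.exists_prefix (dom_iff_walk.1 h₁ p hp)
  obtain ⟨q', hq', -, hpre⟩ := hq.exists_prefix (dom_iff_walk.1 h₂ _ hq)
  rcases List.prefix_concat_iff.1 hpre with heq | hpre
  · exact (by simpa using heq : q' = q ∧ v = u).2.symm
  · exact absurd (hpre.subset (dom_iff_walk.1 h₁ _ hq')) hu

theorem reach_delEdge_of_not_dom (hd : ¬ Dom G s b v) : Reach (DelEdge G a b) s v := by
  obtain ⟨p, hp, hb⟩ := not_dom_iff.1 hd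
  exact (hp.delEdge_of_not_mem hb).reach

namespace IsBridge

theorem edgeOn {p : List V} (hb : IsBridge G s a b) (hw : Walk G s b p) : EdgeOn a b p :=
  hb.2 p (isWalk_iff_walk.2 hw)

theorem dom (hb : IsBridge G s a b) : Dom G s a b :=
  dom_iff_walk.2 fun _ hp => (hb.edgeOn hp).left_mem

theorem ne_root (hb : IsBridge G s a b) : b ≠ s := by
  rintro rfl
  simpa [EdgeOn] using hb.edgeOn (Walk.single b)

theorem ne (hb : IsBridge G s a b) (hr : Reach G s b) : a ≠ b := by
  rintro rfl
  obtain ⟨p, hp⟩ := reach_iff_walk.1 hr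
  obtain ⟨p₁, hp₁, ha, -⟩ := hp.exists_prefix hp.last_mem
  have := (hb.edgeOn hp₁).mem_dropLast
  rw [List.dropLast_concat] at this
  exact ha this

theorem not_reach_delEdge (hb : IsBridge G s a b) (hd : Dom G s b v) :
    ¬ Reach (DelEdge G a b) s v := by
  intro hr
  obtain ⟨p, hp⟩ := reach_iff_walk.1 hr
  have hpG := hp.of_delEdge
  obtain ⟨p₁, hp₁, -, hpre⟩ := hpG.exists_prefix (dom_iff_walk.1 hd p hpG)
  exact (walk_delEdge_iff.1 hp).2 ((hb.edgeOn hp₁).of_prefix hpre)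

theorem dom_of_reach_delEdge (hb : IsBridge G s a b) (hr : Reach (DelEdge G a b) u v)
    (hd : Dom G s b v) : Dom G s b u := by
  by_contra hu
  exact hb.not_reach_delEdge hd ((reach_delEdge_of_not_dom hu).trans hr)

end IsBridge

theorem reach_delEdge_of_not_bridge (hG : StronglyConnected G) (hab : G a b)
    (hb : ¬ IsBridge G s a b) (v : V) : Reach (DelEdge G a b) s v := by
  obtain ⟨p, hp, he⟩ : ∃ p, Walk G s b p ∧ ¬ EdgeOn a b p := by
    simpa [IsBridge, hab, isWalk_iff_walk] using hb
  have hsb : Reach (DelEdge G a b) s b := (walk_delEdge_iff.2 ⟨hp, he⟩).reach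
  suffices ∀ u q, Walk G u v q → Reach (DelEdge G a b) s u → Reach (DelEdge G a b) s v by
    obtain ⟨q, hq⟩ := reach_iff_walk.1 (hG s v)
    exact this s q hq (Reach.refl _ _)
  intro u q hq
  induction hq with
  | single => exact id
  | @cons u w v q hg _ ih =>
    intro hu
    by_cases he : u = a ∧ w = b
    · exact ih (he.2 ▸ hsb)
    · exact ih (hu.trans (Reach.single ⟨hg, he⟩))

theorem reach_delEdge_root (hG : StronglyConnected G) (hab : G a b)
    (h : IsBridge G s a b → ¬ Dom G s b v) : Reach (DelEdge G a b) s v := by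
  by_cases hb : IsBridge G s a b
  · exact reach_delEdge_of_not_dom (h hb)
  · exact reach_delEdge_of_not_bridge hG hab hb v

theorem TwoEdgeConnected.dom_of_bridge (h : TwoEdgeConnected G x y) (hb : IsBridge G s a b)
    (hx : Dom G s b x) : Dom G s b y :=
  hb.dom_of_reach_delEdge (h a b hb.1).2 hx

namespace IsBDRoot

theorem dom_of_forall (hρ : IsBDRoot G s ρ x) (hρ' : IsBDRoot G s ρ' y)
    (h : ∀ c, IsBridgeHead G s c → Dom G s c y → Dom G s c x) : Dom G s ρ' ρ := by
  rcases hρ'.2.1 with hs | hc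
  · exact hs ▸ dom_root G s ρ
  · exact hρ.2.2 ρ' (h ρ' hc hρ'.1) hc

theorem eq_of_forall (hG : StronglyConnected G) (hρ : IsBDRoot G s ρ x)
    (hρ' : IsBDRoot G s ρ' y) (h : ∀ c, IsBridgeHead G s c → (Dom G s c x ↔ Dom G s c y)) :
    ρ = ρ' :=
  (hρ'.dom_of_forall hρ fun c hc => (h c hc).1).antisymm
    (hρ.dom_of_forall hρ' fun c hc => (h c hc).2) (hG s ρ')

theorem dom_of_dom (hρx : IsBDRoot G s ρ x) (hρy : IsBDRoot G s ρ y)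
    (hb : IsBridge G s a b) (hx : Dom G s b x) : Dom G s b y :=
  (hρx.2.2 b hx ⟨a, hb⟩).trans hρy.1

end IsBDRoot

theorem TwoEdgeConnected.bdRoot_eq (hG : StronglyConnected G) (h : TwoEdgeConnected G x y)
    (hρ : IsBDRoot G s ρ x) (hρ' : IsBDRoot G s ρ' y) : ρ = ρ' :=
  hρ.eq_of_forall hG hρ' fun _ ⟨_, hb⟩ => ⟨h.dom_of_bridge hb, h.symm.dom_of_bridge hb⟩

end Dominators

namespace DFSTree

variable {G : V → V → Prop} {s : V} (T : DFSTree G s) {b c u v w : V}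

theorem anc_refl (v : V) : T.Anc v v := ⟨0, rfl⟩

theorem anc_trans (h₁ : T.Anc u v) (h₂ : T.Anc v w) : T.Anc u w := by
  obtain ⟨n, rfl⟩ := h₁
  obtain ⟨m, rfl⟩ := h₂
  exact ⟨n + m, Function.iterate_add_apply _ _ _ _⟩

theorem parent_anc (v : V) : T.Anc (T.parent v) v := ⟨1, rfl⟩

theorem iterate_parent_root (n : ℕ) : T.parent^[n] s = s :=
  Function.iterate_fixed T.parent_root n

theorem pre_le_of_anc (h : T.Anc u v) : T.pre u ≤ T.pre v := by
  obtain ⟨n, rfl⟩ := h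
  induction n generalizing v with
  | zero => exact le_rfl
  | succ n ih =>
    rw [Function.iterate_succ_apply]
    refine (ih (v := T.parent v)).trans ?_
    by_cases hv : v = s
    · rw [hv, T.parent_root]
    · exact (T.pre_parent v hv).le

theorem anc_antisymm (h₁ : T.Anc u v) (h₂ : T.Anc v u) : u = v :=
  T.pre_inj ((T.pre_le_of_anc h₁).antisymm (T.pre_le_of_anc h₂))

theorem exists_tree_walk (h : T.Anc u v) :
    ∃ p, Walk G u v p ∧ ∀ z ∈ p, T.Anc u z ∧ T.Anc z v := by
  obtain ⟨n, hn⟩ := h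
  induction n generalizing v with
  | zero =>
    obtain rfl : v = u := hn
    exact ⟨[v], Walk.single v, by simp [T.anc_refl]⟩
  | succ n ih =>
    by_cases hv : v = s
    · obtain rfl : v = u := by rw [← hn, hv, T.iterate_parent_root]
      exact ⟨[v], Walk.single v, by simp [T.anc_refl]⟩
    · rw [Function.iterate_succ_apply] at hn
      obtain ⟨p, hp, hpm⟩ := ih hn
      refine ⟨p ++ [v], hp.concat (T.parent_edge v hv), fun z hz => ?_⟩
      rcases List.mem_append.1 hz with hz | hz
      · exact ⟨(hpm z hz).1, T.anc_trans (hpm z hz).2 (T.parent_anc v)⟩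
      · obtain rfl := List.mem_singleton.1 hz
        exact ⟨T.anc_trans ⟨n, hn⟩ (T.parent_anc z), T.anc_refl z⟩

theorem anc_of_dom (h : Dom G s u v) : T.Anc u v := by
  obtain ⟨p, hp, hpm⟩ := T.exists_tree_walk (T.root_reach v)
  exact (hpm u (dom_iff_walk.1 h p hp)).2

/-- A tree path from `v` to `w` visits no proper ancestor of `v`. -/
theorem dom_of_anc (hd : Dom G s b w) (hbv : T.Anc b v) (hvw : T.Anc v w) : Dom G s b v := by
  by_cases hbv' : b = v
  · exact hbv' ▸ Dom.refl G s b
  refine dom_iff_walk.2 fun p hp => ?_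
  obtain ⟨q, hq, hqm⟩ := T.exists_tree_walk hvw
  rcases List.mem_append.1 (dom_iff_walk.1 hd _ (hp.append hq)) with h | h
  · exact List.dropLast_subset _ h
  · exact absurd (T.anc_antisymm hbv (hqm b h).1) hbv'

-- the path lemma of depth-first search
theorem anc_of_walk {p : List V} (hw : Walk G u v p) (hc : T.Anc c u)
    (hpre : ∀ z ∈ p, T.pre c ≤ T.pre z) : ∀ z ∈ p, T.Anc c z := by
  induction hw with
  | single => simpa using hc
  | @cons u w v p hg hw ih =>
    have hcw : T.Anc c w := by
      rcases lt_or_ge (T.pre u) (T.pre w) with h | h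
      · exact T.anc_trans hc (T.dfs_edge u w hg h)
      · exact T.interval c w u hc (hpre w (List.mem_cons_of_mem _ hw.head_mem)) h
    simpa [hc] using ih hcw fun z hz => hpre z (List.mem_cons_of_mem _ hz)

theorem anc_of_mem_closed_walk {C : List V} (hC : Walk G u u C) (hc : c ∈ C)
    (hmin : ∀ z ∈ C, T.pre c ≤ T.pre z) : ∀ z ∈ C, T.Anc c z := fun z hz => by
  obtain ⟨q, hq, hqC⟩ := hC.exists_of_mem_closed hc hz
  exact T.anc_of_walk hq (T.anc_refl c) (fun v hv => hmin v (hqC hv)) z hq.last_mem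

end DFSTree

section LoopNesting

variable {G : V → V → Prop} {s : V} {T : DFSTree G s} {hp r : V → V} {a b c u v w x bx : V}

namespace IsLoopParent

theorem anc (hlp : IsLoopParent G s T.Anc hp) (v : V) : T.Anc (hp v) v := by
  by_cases hv : v = s
  · rw [hv, hlp.1]
    exact T.anc_refl s
  · exact (hlp.2 v hv).1

theorem anc_of_hanc (hlp : IsLoopParent G s T.Anc hp) (h : HAnc hp u v) : T.Anc u v := by
  obtain ⟨n, rfl⟩ := h
  induction n with
  | zero => exact T.anc_refl v
  | succ n ih =>
    rw [Function.iterate_succ_apply']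
    exact T.anc_trans (hlp.anc _) ih

theorem hanc_antisymm (hlp : IsLoopParent G s T.Anc hp) (h₁ : HAnc hp u v) (h₂ : HAnc hp v u) :
    u = v :=
  T.anc_antisymm (hlp.anc_of_hanc h₁) (hlp.anc_of_hanc h₂)

theorem exists_loop_walk (hlp : IsLoopParent G s T.Anc hp) (hw : w ≠ s) :
    ∃ q, Walk G w (hp w) q ∧ ∀ z ∈ q, T.Anc (hp w) z := by
  obtain ⟨q, hq, hqm⟩ := (hlp.2 w hw).2.2.1.2
  exact ⟨q, isWalk_iff_walk.1 hq, hqm⟩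

-- every other vertex of the walk lies in `loop(c)`
theorem anc_loopParent_of_mem_closed_walk (hlp : IsLoopParent G s T.Anc hp) {C : List V}
    (hC : Walk G u u C) (hc : c ∈ C) (hmin : ∀ z ∈ C, T.pre c ≤ T.pre z) (hw : w ∈ C)
    (hwc : w ≠ c) (hws : w ≠ s) :
    T.Anc c (hp w) := by
  have hdesc := T.anc_of_mem_closed_walk hC hc hmin
  obtain ⟨q, hq, hqC⟩ := hC.exists_of_mem_closed hw hc
  exact (hlp.2 w hws).2.2.2 c (hdesc w hw) hwc.symm
    ⟨hdesc w hw, q, isWalk_iff_walk.2 hq, fun z hz => hdesc z (hqC hz)⟩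

end IsLoopParent

theorem IsBridge.walk_delEdge_of_forall_anc {p : List V} (hb : IsBridge G s a b) (hab : a ≠ b)
    (hw : Walk G u v p) (h : ∀ z ∈ p, T.Anc b z) : Walk (DelEdge G a b) u v p :=
  hw.mono_of_mem fun z _ hz _ hg =>
    ⟨hg, fun he => hab (T.anc_antisymm (T.anc_of_dom hb.dom) (he.1 ▸ h z hz))⟩

theorem IsBridge.reach_delEdge_of_anc (hb : IsBridge G s a b) (hab : a ≠ b) (hux : T.Anc u x)
    (hu : Dom G s b u) : Reach (DelEdge G a b) u x := by
  obtain ⟨p, hw, hpm⟩ := T.exists_tree_walk hux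
  exact (hb.walk_delEdge_of_forall_anc hab hw
    fun z hz => T.anc_trans (T.anc_of_dom hu) (hpm z hz).1).reach

theorem IsLoopParent.dom_of_dom_loopParent (hlp : IsLoopParent G s T.Anc hp) (hw : w ≠ s)
    (hb : IsBridge G s a b) (hab : a ≠ b) (hd : Dom G s b (hp w)) : Dom G s b w := by
  obtain ⟨q, hq, hqm⟩ := hlp.exists_loop_walk hw
  exact hb.dom_of_reach_delEdge (hb.walk_delEdge_of_forall_anc hab hq
    fun z hz => T.anc_trans (T.anc_of_dom hd) (hqm z hz)).reach hd

theorem IsLoopParent.bdRoot_eq (hG : StronglyConnected G) (hlp : IsLoopParent G s T.Anc hp)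
    {ρ ρ' : V} (hw : w ≠ s) (hρ : IsBDRoot G s ρ (hp w)) (hρ' : IsBDRoot G s ρ' w)
    (hd : Dom G s ρ' (hp w)) : ρ = ρ' :=
  hρ.eq_of_forall hG hρ' fun c ⟨a, hb⟩ =>
    ⟨fun h => hlp.dom_of_dom_loopParent hw hb (hb.ne (hG s c)) h,
      fun h => (hρ'.2.2 c h ⟨a, hb⟩).trans hd⟩

theorem IsLoopParent.not_dom_loopParent (hG : StronglyConnected G)
    (hlp : IsLoopParent G s T.Anc hp) (hr : ∀ z, IsBDRoot G s (r z) z) (hw : w ≠ s)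
    (hbd : r (hp w) ≠ r w) : ¬ Dom G s (r w) (hp w) :=
  fun hd => hbd (hlp.bdRoot_eq hG hw (hr (hp w)) (hr w) hd)

theorem IsBridge.eq_of_mem_closed_walk (hlp : IsLoopParent G s T.Anc hp)
    (hb : IsBridge G s a b) {C : List V} (hC : Walk (DelEdge G a b) u u C) (hvC : v ∈ C)
    (hdu : Dom G s b u) (hu : ¬ Dom G s b (hp u)) (hv : ¬ Dom G s b (hp v)) : u = v := by
  classical
  have hdC : ∀ z ∈ C, Dom G s b z := fun z hz => by
    obtain ⟨q, hq, -⟩ := hC.exists_of_mem_closed hz hC.head_mem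
    exact hb.dom_of_reach_delEdge hq.reach hdu
  obtain ⟨c, hc, hmin⟩ := C.toFinset.exists_min_image T.pre
    ⟨u, List.mem_toFinset.2 hC.head_mem⟩
  simp only [List.mem_toFinset] at hc hmin
  have hdom : ∀ w ∈ C, w ≠ c → Dom G s b (hp w) := fun w hw hwc => by
    have hws : w ≠ s := fun h => hb.ne_root (h ▸ hdC w hw).eq_root
    exact T.dom_of_anc (hdC w hw) (T.anc_trans (T.anc_of_dom (hdC c hc))
      (hlp.anc_loopParent_of_mem_closed_walk hC.of_delEdge hc hmin hw hwc hws)) (hlp.anc w)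
  by_contra hne
  by_cases huc : u = c
  · exact hv (hdom v hvC (huc ▸ Ne.symm hne))
  · exact hu (hdom u hC.head_mem huc)

namespace IsNearestBoundary

theorem induction (hlp : IsLoopParent G s T.Anc hp) (hbx : IsNearestBoundary s r hp x bx)
    {P : V → Prop} (h₀ : P x) (step : ∀ v, v ≠ s → r (hp v) = r v → P v → P (hp v)) :
    P bx := by
  classical
  have hex : ∃ n, hp^[n] x = bx := hbx.1
  suffices ∀ j ≤ Nat.find hex, P (hp^[j] x) from Nat.find_spec hex ▸ this _ le_rfl
  intro j hj
  induction j with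
  | zero => exact h₀
  | succ j ih =>
    have hnb : ¬ Boundary s r hp (hp^[j] x) := fun hbd =>
      Nat.find_min hex hj (hlp.hanc_antisymm (hbx.2.2 _ ⟨j, rfl⟩ hbd) ⟨Nat.find hex - j, by
        rw [← Function.iterate_add_apply, Nat.sub_add_cancel (by omega), Nat.find_spec hex]⟩)
    simp only [Boundary, not_or, not_not] at hnb
    rw [Function.iterate_succ_apply']
    exact step _ hnb.1 hnb.2 (ih (by omega))

theorem bdRoot_eq (hlp : IsLoopParent G s T.Anc hp) (hbx : IsNearestBoundary s r hp x bx) :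
    r bx = r x :=
  hbx.induction hlp (P := fun v => r v = r x) rfl fun _ _ h h' => h.trans h'

theorem dom_and_sconn_delEdge (hG : StronglyConnected G) (hlp : IsLoopParent G s T.Anc hp)
    (hr : ∀ z, IsBDRoot G s (r z) z) (hbx : IsNearestBoundary s r hp x bx)
    (hb : IsBridge G s a b) (hx : Dom G s b x) :
    Dom G s b bx ∧ SConn (DelEdge G a b) x bx := by
  have hab := hb.ne (hG s b)
  obtain ⟨hd, hreach⟩ : Dom G s b bx ∧ Reach (DelEdge G a b) x bx := by
    refine hbx.induction hlp (P := fun v => Dom G s b v ∧ Reach (DelEdge G a b) x v)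
      ⟨hx, Reach.refl _ _⟩ fun v hv hrv ⟨hdv, hxv⟩ => ?_
    have hd' : Dom G s b (hp v) := (hr v).dom_of_dom (hrv ▸ hr (hp v)) hb hdv
    obtain ⟨q, hq, hqm⟩ := hlp.exists_loop_walk hv
    exact ⟨hd', hxv.trans (hb.walk_delEdge_of_forall_anc hab hq
      fun z hz => T.anc_trans (T.anc_of_dom hd') (hqm z hz)).reach⟩
  exact ⟨hd, hreach, hb.reach_delEdge_of_anc hab (hlp.anc_of_hanc hbx.1) hd⟩

end IsNearestBoundary

end LoopNesting

section Labels

variable {G : V → V → Prop} {s : V} {T : DFSTree G s} {hp r : V → V} {a b x y bx bY : V}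

theorem TwoEdgeConnected.nearestBoundary_eq (hG : StronglyConnected G)
    (hlp : IsLoopParent G s T.Anc hp) (hr : ∀ z, IsBDRoot G s (r z) z)
    (h : TwoEdgeConnected G x y) (hrxy : r x = r y) (hbx : IsNearestBoundary s r hp x bx)
    (hbY : IsNearestBoundary s r hp y bY) : bx = bY := by
  wlog hYs : bY ≠ s generalizing x y bx bY
  · by_cases hxs : bx = s
    · rw [hxs, not_not.1 hYs]
    · exact (this h.symm hrxy.symm hbY hbx hxs).symm
  have hnd := hlp.not_dom_loopParent hG hr hYs (hbY.2.1.resolve_left hYs)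
  obtain ⟨a, hb⟩ := (hr bY).2.1.resolve_left fun h => hnd (h ▸ dom_root G s _)
  rw [hbY.bdRoot_eq hlp] at hb hnd
  obtain ⟨hdbx, hsx⟩ := hbx.dom_and_sconn_delEdge hG hlp hr hb (hrxy ▸ (hr x).1)
  obtain ⟨-, hsY⟩ := hbY.dom_and_sconn_delEdge hG hlp hr hb (hr y).1
  obtain ⟨C, hC, hYC⟩ := (hsx.symm.trans ((h a (r y) hb.1).trans hsY)).exists_closed_walk
  have hxs : bx ≠ s := fun h => hb.ne_root (h ▸ hdbx).eq_root
  have hndx := hlp.not_dom_loopParent hG hr hxs (hbx.2.1.resolve_left hxs)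
  rw [hbx.bdRoot_eq hlp, hrxy] at hndx
  exact hb.eq_of_mem_closed_walk hlp hC hYC hdbx hndx hnd

theorem sconn_or_reach_delEdge_of_labels_eq (hG : StronglyConnected G)
    (hlp : IsLoopParent G s T.Anc hp) (hr : ∀ z, IsBDRoot G s (r z) z) (hrxy : r x = r y)
    (hbx : IsNearestBoundary s r hp x bx) (hby : IsNearestBoundary s r hp y bx) (hab : G a b) :
    SConn (DelEdge G a b) x y ∨ Reach (DelEdge G a b) s x ∧ Reach (DelEdge G a b) s y := by
  by_cases h : IsBridge G s a b ∧ Dom G s b x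
  · obtain ⟨hb, hx⟩ := h
    have hy := (hr x).dom_of_dom (hrxy ▸ hr y) hb hx
    exact Or.inl ((hbx.dom_and_sconn_delEdge hG hlp hr hb hx).2.trans
      (hby.dom_and_sconn_delEdge hG hlp hr hb hy).2.symm)
  · refine Or.inr ⟨reach_delEdge_root hG hab fun hb hx => h ⟨hb, hx⟩,
      reach_delEdge_root hG hab fun hb hy => h ⟨hb, ?_⟩⟩
    exact (hr y).dom_of_dom (hrxy ▸ hr x) hb hy

end Labels

/-- Two vertices of a strongly connected digraph are 2-edge-connected if and only if
they have the same bridge-decomposition roots in `D` and `D^R` and the same nearest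
boundary ancestors in `H` and `H^R`. -/
theorem stmt12 (G : V → V → Prop) (hG : StronglyConnected G) (s : V)
    (T : DFSTree G s) (TR : DFSTree (Rev G) s)
    (hp hpR : V → V)
    (hlp : IsLoopParent G s T.Anc hp) (hlpR : IsLoopParent (Rev G) s TR.Anc hpR)
    (r rR : V → V)
    (hr : ∀ z, IsBDRoot G s (r z) z) (hrR : ∀ z, IsBDRoot (Rev G) s (rR z) z)
    (x y : V) (bx bY bxR bYR : V)
    (hbx : IsNearestBoundary s r hp x bx) (hbY : IsNearestBoundary s r hp y bY)
    (hbxR : IsNearestBoundary s rR hpR x bxR) (hbYR : IsNearestBoundary s rR hpR y bYR) :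
    TwoEdgeConnected G x y ↔ (r x = r y ∧ bx = bY ∧ rR x = rR y ∧ bxR = bYR) := by
  constructor
  · intro h
    have hrxy := h.bdRoot_eq hG (hr x) (hr y)
    have hrxyR := h.rev.bdRoot_eq hG.rev (hrR x) (hrR y)
    exact ⟨hrxy, h.nearestBoundary_eq hG hlp hr hrxy hbx hbY,
      hrxyR, h.rev.nearestBoundary_eq hG.rev hlpR hrR hrxyR hbxR hbYR⟩
  · rintro ⟨hrxy, rfl, hrxyR, rfl⟩ a b hab
    rcases sconn_or_reach_delEdge_of_labels_eq hG hlp hr hrxy hbx hbY hab with h | ⟨hsx, hsy⟩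
    · exact h
    rcases sconn_or_reach_delEdge_of_labels_eq (b := a) hG.rev hlpR hrR hrxyR hbxR hbYR hab
      with h | ⟨hxs, hys⟩
    · rwa [delEdge_rev, sconn_rev_iff] at h
    rw [delEdge_rev, reach_rev_iff] at hxs hys
    exact ⟨hxs.trans hsy, hys.trans hsx⟩

end StrongConn
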